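/- (Corners of regular boundaries.) Let n ≥ d ≥ 1, set k = n + d, and let C be a regular color map on T_k. Then every edge of T_k with both endpoints in one of the three corner sub-triangles of side d of T_k (the sub-triangle of side d containing one of the three extremal vertices (0,0), (k,0), (0,k)) has color 1. -/

import Mathlib

noncomputable section

/-- The four possible colors of a puzzle edge: `0`, `1`, `3` and `m`. -/
inductive PColor
  | c0 | c1 | c3 | cm
deriving DecidableEq

/-- The step of an edge of type `ℓ`: type `0` goes to `x+(−1,0)`, type `1` to `x+(1,−1)`,
type `2` to `x+(0,1)`. -/
def edgeStep : Fin 3 → ℤ × ℤ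
  | 0 => (-1, 0)
  | 1 => (1, -1)
  | 2 => (0, 1)

/-- A triple of colors, read clockwise around a triangular face, is admissible if it is a
cyclic rotation of `(0,0,0)`, `(1,1,1)`, `(1,0,3)` or `(0,1,m)`. -/
def okTriple (a b c : PColor) : Prop :=
  (a = .c0 ∧ b = .c0 ∧ c = .c0) ∨ (a = .c1 ∧ b = .c1 ∧ c = .c1) ∨
  (a = .c1 ∧ b = .c0 ∧ c = .c3) ∨ (a = .c0 ∧ b = .c3 ∧ c = .c1) ∨
  (a = .c3 ∧ b = .c1 ∧ c = .c0) ∨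
  (a = .c0 ∧ b = .c1 ∧ c = .cm) ∨ (a = .c1 ∧ b = .cm ∧ c = .c0) ∨
  (a = .cm ∧ b = .c0 ∧ c = .c1)

/-- A color map on the triangular grid `T_k`. -/
def IsColorMap (k : ℕ) (C : Fin 3 → ℤ × ℤ → PColor) : Prop :=
  (∀ x : ℤ × ℤ, 0 ≤ x.1 → 0 ≤ x.2 → x.1 + x.2 + 1 ≤ (k : ℤ) →
    okTriple (C 2 x) (C 1 (x + (0, 1))) (C 0 (x + (1, 0)))) ∧
  (∀ x : ℤ × ℤ, 0 ≤ x.1 → 1 ≤ x.2 → x.1 + x.2 + 1 ≤ (k : ℤ) →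
    okTriple (C 0 (x + (1, 0))) (C 2 (x + (1, -1))) (C 1 x))

/-- The boundary color at height `h` on a side of `T_{n+d}` for a regular color map:
`1` for `0 ≤ h < d`, `0` for `d ≤ h < n`, `1` for `n ≤ h < n+d`. -/
def bCol (n d : ℕ) (h : ℤ) : PColor :=
  if h < (d : ℤ) then .c1 else if h < (n : ℤ) then .c0 else .c1

/-- A regular color map on `T_{n+d}`: a color map whose boundary edges, ordered by
increasing height on each of the three sides, have colors `1^d 0^{n-d} 1^d`. -/
def IsRegularColorMap (n d : ℕ) (C : Fin 3 → ℤ × ℤ → PColor) : Prop :=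
  IsColorMap (n + d) C ∧
  (∀ h : ℤ, 0 ≤ h → h ≤ (n : ℤ) + d - 1 → C 0 ((n : ℤ) + d - h, 0) = bCol n d h) ∧
  (∀ h : ℤ, 0 ≤ h → h ≤ (n : ℤ) + d - 1 → C 1 (h, (n : ℤ) + d - h) = bCol n d h) ∧
  (∀ h : ℤ, 0 ≤ h → h ≤ (n : ℤ) + d - 1 → C 2 (0, h) = bCol n d h)

/-- Membership in the equilateral sub-triangle with corner `(r₀, s₀)` and side `t`. -/
def inTri (r0 s0 : ℤ) (t : ℕ) (v : ℤ × ℤ) : Prop :=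
  r0 ≤ v.1 ∧ s0 ≤ v.2 ∧ v.1 + v.2 ≤ r0 + s0 + t

/-!
Peel the corner triangle of side `d` at `(0,0)` layer by layer. Between the lines `r + s = t` and
`r + s = t + 1` lies a strip of faces whose lower edges are already known to have color `1` and
whose two ends are boundary edges of color `1`. Walking up the strip, the crossing edges stay in
`{1, m}` (an `m` can only be followed by an `m`), and the top face forces color `1`; walking back
down, every face of the strip is then `(1,1,1)`. The other two corners follow by rotating the
grid by `120°`, which preserves regularity.
-/

instance : Fintype PColor where
  elems := {.c0, .c1, .c3, .cm}
  complete x := by cases x <;> decide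

instance (a b c : PColor) : Decidable (okTriple a b c) := by
  unfold okTriple; infer_instance

theorem okTriple.rotate : ∀ {a b c : PColor}, okTriple a b c → okTriple b c a := by decide

theorem eq_c1_of_okTriple_c1_c1 : ∀ {b : PColor}, okTriple .c1 b .c1 → b = .c1 := by decide

theorem eq_c1_of_okTriple_c1_left : ∀ {c a : PColor}, okTriple .c1 c a → (a = .c1 ∨ a = .cm) →
    c = .c1 ∧ a = .c1 := by decide

theorem eq_c1_or_cm_of_okTriple : ∀ {a b c a' : PColor}, okTriple b c a → okTriple a' b .c1 →
    (a = .c1 ∨ a = .cm) → (a' = .c1 ∨ a' = .cm) := by decide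

theorem strip_eq_c1 (t : ℕ) : ∀ (a b c : ℕ → PColor), (a 0 = .c1 ∨ a 0 = .cm) → b t = .c1 →
    (∀ s ≤ t, okTriple (b s) (c s) (a s)) → (∀ s < t, okTriple (a (s + 1)) (b s) .c1) →
    ∀ s ≤ t, a s = .c1 ∧ b s = .c1 ∧ c s = .c1 := by
  induction t with
  | zero =>
    intro a b c ha hb hdirect _ s hs
    obtain rfl : s = 0 := by omega
    have h := hdirect 0 le_rfl
    rw [hb] at h
    exact ⟨(eq_c1_of_okTriple_c1_left h ha).2, hb, (eq_c1_of_okTriple_c1_left h ha).1⟩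
  | succ t ih =>
    intro a b c ha hb hdirect hreversed
    have hdirect₀ := hdirect 0 (by omega)
    have hreversed₀ := hreversed 0 (by omega)
    have hrest := ih (a ·.succ) (b ·.succ) (c ·.succ)
      (eq_c1_or_cm_of_okTriple hdirect₀ hreversed₀ ha) hb
      (fun s hs => hdirect _ (by omega)) (fun s hs => hreversed _ (by omega))
    rw [(hrest 0 (by omega)).1] at hreversed₀
    have hb₀ := eq_c1_of_okTriple_c1_c1 hreversed₀
    rw [hb₀] at hdirect₀
    obtain ⟨hc₀, ha₀⟩ := eq_c1_of_okTriple_c1_left hdirect₀ ha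
    rintro (_ | s) hs
    · exact ⟨ha₀, hb₀, hc₀⟩
    · exact hrest s (by omega)

namespace IsColorMap

variable {k : ℕ} {C : Fin 3 → ℤ × ℤ → PColor}

theorem direct (hC : IsColorMap k C) {r s : ℤ} (hr : 0 ≤ r) (hs : 0 ≤ s) (hrs : r + s + 1 ≤ k) :
    okTriple (C 2 (r, s)) (C 1 (r, s + 1)) (C 0 (r + 1, s)) := by
  simpa using hC.1 (r, s) hr hs hrs

theorem reversed (hC : IsColorMap k C) {r s : ℤ} (hr : 0 ≤ r) (hs : 0 ≤ s)
    (hrs : r + s + 2 ≤ k) :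
    okTriple (C 0 (r + 1, s + 1)) (C 2 (r + 1, s)) (C 1 (r, s + 1)) := by
  simpa using hC.2 (r, s + 1) hr (by omega) (by simp only; omega)

end IsColorMap

theorem bCol_eq_c1_of_lt {n d : ℕ} {h : ℤ} (hh : h < d) : bCol n d h = .c1 := if_pos hh

theorem bCol_eq_c1_of_le {n d : ℕ} {h : ℤ} (hh : n ≤ h) : bCol n d h = .c1 := by
  unfold bCol; split_ifs <;> first | rfl | omega

def AllOneOn (C : Fin 3 → ℤ × ℤ → PColor) (P : ℤ × ℤ → Prop) : Prop :=
  ∀ ℓ y, P y → P (y + edgeStep ℓ) → C ℓ y = .c1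

namespace IsRegularColorMap

variable {n d : ℕ} {C : Fin 3 → ℤ × ℤ → PColor}

theorem layer_eq_c1 (hC : IsRegularColorMap n d C) {t : ℕ} (ht : t < d)
    (hprev : AllOneOn C (inTri 0 0 t)) {r s : ℤ} (hr : 0 ≤ r) (hs : 0 ≤ s) (hrs : r + s = t) :
    C 0 (r + 1, s) = .c1 ∧ C 2 (r, s) = .c1 ∧ C 1 (r, s + 1) = .c1 := by
  obtain ⟨hmap, hbot, -, hleft⟩ := hC
  lift s to ℕ using hs
  obtain rfl : r = t - s := by omega
  refine strip_eq_c1 t (fun s => C 0 (t - s + 1, s)) (fun s => C 2 (t - s, s))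
    (fun s => C 1 (t - s, s + 1)) (Or.inl ?_) ?_
    (fun s hs => hmap.direct (by omega) (by omega) (by omega)) (fun s hs => ?_) s (by omega)
  · simpa [bCol_eq_c1_of_le (show (n : ℤ) ≤ n + d - (t + 1) by omega)] using
      hbot (n + d - (t + 1)) (by omega) (by omega)
  · simpa [bCol_eq_c1_of_lt (show (t : ℤ) < d by omega)] using hleft t (by omega) (by omega)
  have hlow : C 1 (t - (s + 1), s + 1) = .c1 :=
    hprev 1 _ (by simp [inTri]; omega) (by simp [inTri, edgeStep]; omega)
  have h := hmap.reversed (r := t - (s + 1)) (s := s) (by omega) (by omega) (by omega)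
  rw [hlow] at h
  convert h using 3 <;> push_cast <;> ring

theorem allOneOn_inTri_origin_of_le (hC : IsRegularColorMap n d C) :
    ∀ t ≤ d, AllOneOn C (inTri 0 0 t) := by
  intro t
  induction t with
  | zero =>
    intro _ ℓ y hy hy'
    fin_cases ℓ <;> simp [inTri, edgeStep] at hy hy' <;> omega
  | succ t ih =>
    intro ht ℓ ⟨r, s⟩ hy hy'
    have hprev := ih (by omega)
    have hlayer {r s : ℤ} := hC.layer_eq_c1 (by omega : t < d) hprev (r := r) (s := s)
    by_cases hold : inTri 0 0 t (r, s) ∧ inTri 0 0 t ((r, s) + edgeStep ℓ)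
    · exact hprev ℓ _ hold.1 hold.2
    fin_cases ℓ <;>
      simp only [inTri, edgeStep, Prod.mk_add_mk, Nat.cast_add, Nat.cast_one, not_and, not_le]
        at hy hy' hold ⊢
    · simpa using (hlayer (r := r - 1) (s := s) (by omega) (by omega) (by omega)).1
    · simpa using (hlayer (r := r) (s := s - 1) (by omega) (by omega) (by omega)).2.2
    · exact (hlayer (by omega) (by omega) (by omega)).2.1

end IsRegularColorMap

/-- Rotation of `T_k` by `120°`; it maps edges of type `ℓ` to edges of type `ℓ + 1`, and
`rotate k C` is the image of the color map `C` under it. -/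
def rotVertex (k : ℤ) (y : ℤ × ℤ) : ℤ × ℤ := (k - y.1 - y.2, y.1)

def rotate (k : ℤ) (C : Fin 3 → ℤ × ℤ → PColor) : Fin 3 → ℤ × ℤ → PColor :=
  fun ℓ y => C (ℓ + 2) (y.2, k - y.1 - y.2)

theorem rotate_rotVertex (k : ℤ) (C : Fin 3 → ℤ × ℤ → PColor) (ℓ : Fin 3) (y : ℤ × ℤ) :
    rotate k C (ℓ + 1) (rotVertex k y) = C ℓ y := by
  simp only [rotate, rotVertex, add_assoc, show (1 + 2 : Fin 3) = 0 from rfl, add_zero]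
  congr 1
  ext <;> ring

theorem rotVertex_add_edgeStep (k : ℤ) (ℓ : Fin 3) (y : ℤ × ℤ) :
    rotVertex k (y + edgeStep ℓ) = rotVertex k y + edgeStep (ℓ + 1) := by
  fin_cases ℓ <;> ext <;>
    simp only [rotVertex, edgeStep, Prod.fst_add, Prod.snd_add, Fin.zero_eta, Fin.mk_one,
      Fin.reduceFinMk, Fin.reduceAdd] <;> ring

theorem AllOneOn.of_rotate {k : ℤ} {C : Fin 3 → ℤ × ℤ → PColor} {P Q : ℤ × ℤ → Prop}
    (h : AllOneOn (rotate k C) Q) (hPQ : ∀ y, P y → Q (rotVertex k y)) : AllOneOn C P := by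
  intro ℓ y hy hy'
  rw [← rotate_rotVertex k C ℓ y]
  exact h _ _ (hPQ y hy) (by simpa [rotVertex_add_edgeStep] using hPQ _ hy')

theorem IsColorMap.rotate {k : ℕ} {C : Fin 3 → ℤ × ℤ → PColor} (hC : IsColorMap k C) :
    IsColorMap k (rotate k C) := by
  refine ⟨fun ⟨r, s⟩ hr hs hrs => ?_, fun ⟨r, s⟩ hr hs hrs => ?_⟩
  · have h := (hC.direct (r := s) (s := k - r - s - 1) hs (by omega) (by omega)).rotate
    simp only [_root_.rotate, Prod.mk_add_mk, Fin.reduceAdd]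
    convert h using 2 <;> ext <;> simp only <;> ring
  · have h := (hC.reversed (r := s - 1) (s := k - r - s - 1) (by omega) (by omega)
      (by omega)).rotate
    simp only [_root_.rotate, Prod.mk_add_mk, Fin.reduceAdd]
    convert h using 2 <;> ext <;> simp only <;> ring

theorem IsRegularColorMap.rotate {n d : ℕ} {C : Fin 3 → ℤ × ℤ → PColor}
    (hC : IsRegularColorMap n d C) : IsRegularColorMap n d (rotate (n + d : ℕ) C) := by
  obtain ⟨hmap, hbot, htop, hleft⟩ := hC
  refine ⟨hmap.rotate, fun h h₀ h₁ => ?_, fun h h₀ h₁ => ?_, fun h h₀ h₁ => ?_⟩ <;>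
    simp only [_root_.rotate, Fin.reduceAdd, Nat.cast_add]
  · simpa using hleft h h₀ h₁
  · simpa using hbot h h₀ h₁
  · simpa using htop h h₀ h₁

theorem IsRegularColorMap.allOneOn_inTri_top {n d : ℕ} {C : Fin 3 → ℤ × ℤ → PColor}
    (hC : IsRegularColorMap n d C) : AllOneOn C (inTri 0 n d) :=
  (hC.rotate.allOneOn_inTri_origin_of_le d le_rfl).of_rotate fun _ hy => by
    simp only [inTri, rotVertex] at hy ⊢; push_cast; omega

theorem statement14_general (n d : ℕ)
    (C : Fin 3 → ℤ × ℤ → PColor) (hC : IsRegularColorMap n d C) :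
    ∀ ℓ : Fin 3, ∀ y : ℤ × ℤ,
      ((inTri 0 0 d y ∧ inTri 0 0 d (y + edgeStep ℓ)) ∨
       (inTri (n : ℤ) 0 d y ∧ inTri (n : ℤ) 0 d (y + edgeStep ℓ)) ∨
       (inTri 0 (n : ℤ) d y ∧ inTri 0 (n : ℤ) d (y + edgeStep ℓ))) →
      C ℓ y = .c1 := by
  have h₀ := hC.allOneOn_inTri_origin_of_le d le_rfl
  have h₁ : AllOneOn C (inTri n 0 d) := hC.rotate.allOneOn_inTri_top.of_rotate fun _ hy => by
    simp only [inTri, rotVertex] at hy ⊢; push_cast; omega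
  have h₂ := hC.allOneOn_inTri_top
  rintro ℓ y (⟨hy, hy'⟩ | ⟨hy, hy'⟩ | ⟨hy, hy'⟩)
  exacts [h₀ ℓ y hy hy', h₁ ℓ y hy hy', h₂ ℓ y hy hy']

/-- **Corners of regular boundaries.**
For a regular color map on `T_{n+d}`, every edge with both endpoints in one of the three
corner sub-triangles of side `d` has color `1`. -/
theorem statement14 (n d : ℕ) (hd : 1 ≤ d) (hdn : d ≤ n)
    (C : Fin 3 → ℤ × ℤ → PColor) (hC : IsRegularColorMap n d C) :
    ∀ ℓ : Fin 3, ∀ y : ℤ × ℤ,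
      ((inTri 0 0 d y ∧ inTri 0 0 d (y + edgeStep ℓ)) ∨
       (inTri (n : ℤ) 0 d y ∧ inTri (n : ℤ) 0 d (y + edgeStep ℓ)) ∨
       (inTri 0 (n : ℤ) d y ∧ inTri 0 (n : ℤ) d (y + edgeStep ℓ))) →
      C ℓ y = .c1 :=
  statement14_general n d C hC
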